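/- arXiv:2409.17218 — 2 statements merged into one kernel-verified Lean document; each statement's English description precedes it below -/
import Mathlib

section
/- Let P_N be the lattice of set partitions of {1,…,N} and let d(p,q)=#(p)+#(q)−2#(p∨q). Then d is a metric on P_N: for all p,p',p''∈P_N one has d(p,p')≥0 with equality if and only if p=p', d(p,p')=d(p',p), and d(p,p')+d(p',p'')≥d(p,p''). Moreover: (a) d(p,p')≥|#(p)−#(p')| for all p,p'∈P_N; (b) d(p₁,p₂)≥d(p₁∨r,p₂∨r) for all p₁,p₂,r∈P_N. -/
open scoped Classical

noncomputable section

namespace RTN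

/-! ## Set partitions -/

/-- Number of blocks of a set partition (as an integer). -/
def nb {α : Type*} (p : Setoid α) : ℤ := Nat.card (Quotient p)

/-- The partition distance `d(p,q) = #(p) + #(q) - 2 #(p ⊔ q)`. -/
def pdist {α : Type*} (p q : Setoid α) : ℤ := nb p + nb q - 2 * nb (p ⊔ q)

lemma pdist_comm {α : Type*} (p q : Setoid α) : pdist p q = pdist q p := by
  unfold pdist
  rw [sup_comm p q]
  ring

/-- `k` is a singlet (block of size one) of the partition `p`. -/
def IsSinglet {α : Type*} (p : Setoid α) (k : α) : Prop := ∀ y, p.r k y → y = k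

/-- The number of singlets `#₁(p)` of a partition. -/
def nS {α : Type*} (p : Setoid α) : ℤ := Nat.card {k : α // IsSinglet p k}

/-- The singlet distance `d₁(s₁,s₂) = #₁(s₁) + #₁(s₂) - 2 #₁(s₁ ⊔ s₂)`. -/
def sdist {α : Type*} (s₁ s₂ : Setoid α) : ℤ := nS s₁ + nS s₂ - 2 * nS (s₁ ⊔ s₂)

/-- The singlet pattern `s(p)`: the coarsest partition whose singlets are exactly
those of `p` (all non-singlet elements lie in one block). -/
def spat {α : Type*} (p : Setoid α) : Setoid α where
  r x y := x = y ∨ (¬ IsSinglet p x ∧ ¬ IsSinglet p y)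
  iseqv := by
    refine ⟨fun x => Or.inl rfl, ?_, ?_⟩
    · intro x y h
      rcases h with rfl | ⟨hx, hy⟩
      · exact Or.inl rfl
      · exact Or.inr ⟨hy, hx⟩
    · intro x y z h1 h2
      rcases h1 with rfl | ⟨hx, hy⟩
      · exact h2
      · rcases h2 with rfl | ⟨_, hz⟩
        · exact Or.inr ⟨hx, hy⟩
        · exact Or.inr ⟨hx, hz⟩

/-- The bit `b^k(p)`: `0` if `p` has a singlet at `k`, else `1`. -/
def bbit {α : Type*} (p : Setoid α) (k : α) : ℤ := if IsSinglet p k then 0 else 1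

/-- The size of the block of `p` containing `x`. -/
def blockSize {α : Type*} (p : Setoid α) (x : α) : ℕ := Nat.card {y : α // p.r x y}

noncomputable instance {α : Type*} [Finite α] (s : Setoid α) : Fintype (Quotient s) :=
  Fintype.ofFinite _

/-! ## Permutations -/

/-- The partition of `α` into orbits (cycles) of a permutation. -/
def orbitSetoid {α : Type*} (g : Equiv.Perm α) : Setoid α where
  r x y := ∃ k : ℤ, (g ^ k) x = y
  iseqv := by
    refine ⟨fun x => ⟨0, by simp⟩, ?_, ?_⟩
    · rintro x y ⟨k, rfl⟩
      exact ⟨-k, by simp [← Equiv.Perm.mul_apply, ← zpow_add]⟩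
    · rintro x y z ⟨k, rfl⟩ ⟨l, rfl⟩
      exact ⟨l + k, by rw [zpow_add, Equiv.Perm.mul_apply]⟩

/-- The number of cycles `#(g)` of a permutation (fixed points included). -/
def ncyc {α : Type*} (g : Equiv.Perm α) : ℤ := nb (orbitSetoid g)

/-- The Cayley distance `d(g,h) = N - #(g h⁻¹)`. -/
def cayley {α : Type*} [Fintype α] (g h : Equiv.Perm α) : ℤ :=
  (Fintype.card α : ℤ) - ncyc (g * h⁻¹)

lemma orbitSetoid_inv {α : Type*} (g : Equiv.Perm α) : orbitSetoid g⁻¹ = orbitSetoid g := by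
  apply Setoid.ext
  intro x y
  constructor
  · rintro ⟨k, hk⟩
    exact ⟨-k, by rw [← inv_zpow']; exact hk⟩
  · rintro ⟨k, hk⟩
    exact ⟨-k, by rw [inv_zpow', neg_neg]; exact hk⟩

lemma cayley_comm {α : Type*} [Fintype α] (g h : Equiv.Perm α) : cayley g h = cayley h g := by
  unfold cayley ncyc
  rw [show h * g⁻¹ = (g * h⁻¹)⁻¹ by rw [mul_inv_rev, inv_inv], orbitSetoid_inv]

/-- Coarse graining of a partition `p` by the blocks of `P(g₀)`: the partition of the set
of blocks of `P(g₀)` induced by `p ⊔ P(g₀)`. -/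
def coarse {α : Type*} (g₀ : Equiv.Perm α) (p : Setoid α) :
    Setoid (Quotient (orbitSetoid g₀)) where
  r u v := ∃ x y : α, Quotient.mk (orbitSetoid g₀) x = u ∧ Quotient.mk (orbitSetoid g₀) y = v ∧
    (p ⊔ orbitSetoid g₀).r x y
  iseqv := by
    refine ⟨?_, ?_, ?_⟩
    · intro u
      obtain ⟨x, rfl⟩ := Quotient.exists_rep u
      exact ⟨x, x, rfl, rfl, (p ⊔ orbitSetoid g₀).iseqv.refl x⟩
    · rintro u v ⟨x, y, hx, hy, hxy⟩
      exact ⟨y, x, hy, hx, (p ⊔ orbitSetoid g₀).iseqv.symm hxy⟩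
    · rintro u v w ⟨x, y, hx, hy, hxy⟩ ⟨y', z, hy', hz, hyz⟩
      refine ⟨x, z, hx, hz, ?_⟩
      have h1 : (orbitSetoid g₀).r y y' := Quotient.exact (hy.trans hy'.symm)
      have h2 : (p ⊔ orbitSetoid g₀).r y y' :=
        (le_sup_right : orbitSetoid g₀ ≤ p ⊔ orbitSetoid g₀) h1
      exact (p ⊔ orbitSetoid g₀).iseqv.trans hxy
        ((p ⊔ orbitSetoid g₀).iseqv.trans h2 hyz)

/-- The coarse graining `q_{g₀}(g) ∈ P_{#(g₀)}` of a permutation `g`. -/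
def qc {α : Type*} (g₀ g : Equiv.Perm α) : Setoid (Quotient (orbitSetoid g₀)) :=
  coarse g₀ (orbitSetoid g)

/-! ## Standard reflected-entropy boundary elements -/

/-- `g_B`, the product of `n` disjoint `m`-cycles `(k,ℓ) ↦ (k,ℓ+1)`. -/
def gB (n m : ℕ) : Equiv.Perm (Fin n × Fin m) :=
  Equiv.prodCongr (Equiv.refl (Fin n)) (finRotate m)

/-- `γ`, cyclically shifting `k ↦ k+1` on the elements with `ℓ` in the lower half,
fixing the rest. -/
def gamma (n m : ℕ) : Equiv.Perm (Fin n × Fin m) where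
  toFun x := if m / 2 ≤ (x.2 : ℕ) then (finRotate n x.1, x.2) else x
  invFun x := if m / 2 ≤ (x.2 : ℕ) then ((finRotate n).symm x.1, x.2) else x
  left_inv := by
    intro x
    by_cases h : m / 2 ≤ (x.2 : ℕ) <;> simp [h, -finRotate_apply, -finRotate_symm_apply]
  right_inv := by
    intro x
    by_cases h : m / 2 ≤ (x.2 : ℕ) <;> simp [h, -finRotate_apply, -finRotate_symm_apply]

/-- `g_A = γ⁻¹ g_B γ`. -/
def gA (n m : ℕ) : Equiv.Perm (Fin n × Fin m) :=
  (gamma n m)⁻¹ * gB n m * gamma n m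

/-- For even `m`, `Fin m` splits into an upper and a lower half. -/
def halfEquiv (m : ℕ) (hm : m % 2 = 0) : Fin 2 × Fin (m / 2) ≃ Fin m :=
  finProdFinEquiv.trans (finCongr (by omega))

/-- `X`, the product of the `2n` disjoint `(m/2)`-cycles cyclically permuting the
upper and the lower half of each block `k`. -/
def Xel (n m : ℕ) (hm : m % 2 = 0) : Equiv.Perm (Fin n × Fin m) :=
  Equiv.prodCongr (Equiv.refl (Fin n))
    ((halfEquiv m hm).permCongr
      (Equiv.prodCongr (Equiv.refl (Fin 2)) (finRotate (m / 2))))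

/-- The set of blocks of `P(X)`; it has `2n` elements. -/
abbrev BX (n m : ℕ) (hm : m % 2 = 0) := Quotient (orbitSetoid (Xel n m hm))

/-- `q_A = q_X(g_A) ∈ P_{2n}`. -/
def qAel (n m : ℕ) (hm : m % 2 = 0) : Setoid (BX n m hm) :=
  qc (Xel n m hm) (gA n m)

/-- `q_B = q_X(g_B) ∈ P_{2n}`. -/
def qBel (n m : ℕ) (hm : m % 2 = 0) : Setoid (BX n m hm) :=
  qc (Xel n m hm) (gB n m)

/-! ## Doubled elements (two copies) -/

/-- Two copies of the index set `{1,…,mn}`. -/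
abbrev DIdx (n m : ℕ) := (Fin n × Fin m) ⊕ (Fin n × Fin m)

/-- `g̃_A = g_A ⊕ g_A`. -/
def gAt (n m : ℕ) : Equiv.Perm (DIdx n m) := Equiv.sumCongr (gA n m) (gA n m)

/-- `g̃_B = g_B ⊕ g_B`. -/
def gBt (n m : ℕ) : Equiv.Perm (DIdx n m) := Equiv.sumCongr (gB n m) (gB n m)

/-- `X̃ = X ⊕ X`. -/
def Xt (n m : ℕ) (hm : m % 2 = 0) : Equiv.Perm (DIdx n m) :=
  Equiv.sumCongr (Xel n m hm) (Xel n m hm)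

/-- The set of blocks of `P(X̃)`; it has `4n` elements. -/
abbrev BXt (n m : ℕ) (hm : m % 2 = 0) := Quotient (orbitSetoid (Xt n m hm))

/-- `q̃_A = q_{X̃}(g̃_A) ∈ P_{4n}`. -/
def qAt (n m : ℕ) (hm : m % 2 = 0) : Setoid (BXt n m hm) :=
  qc (Xt n m hm) (gAt n m)

/-- `q̃_B = q_{X̃}(g̃_B) ∈ P_{4n}`. -/
def qBt (n m : ℕ) (hm : m % 2 = 0) : Setoid (BXt n m hm) :=
  qc (Xt n m hm) (gBt n m)

/-- A block of `P(X̃)` lies in the first copy. -/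
def inCopy1 {n m : ℕ} {hm : m % 2 = 0} (u : BXt n m hm) : Prop :=
  ∃ x, Quotient.mk (orbitSetoid (Xt n m hm)) (Sum.inl x) = u

/-- `#₁⁽¹⁾(q)`: the number of singlets of `q` among the first-copy positions. -/
def nS1 {n m : ℕ} {hm : m % 2 = 0} (q : Setoid (BXt n m hm)) : ℤ :=
  Nat.card {u : BXt n m hm // IsSinglet q u ∧ inCopy1 u}

/-- `#₁⁽²⁾(q)`: the number of singlets of `q` among the second-copy positions. -/
def nS2 {n m : ℕ} {hm : m % 2 = 0} (q : Setoid (BXt n m hm)) : ℤ :=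
  Nat.card {u : BXt n m hm // IsSinglet q u ∧ ¬ inCopy1 u}

/-- `τ ∈ P_{4n}`, the two-block partition separating the two copies. -/
def tau (n m : ℕ) (hm : m % 2 = 0) : Setoid (BXt n m hm) where
  r u v := inCopy1 u ↔ inCopy1 v
  iseqv := ⟨fun _ => Iff.rfl, Iff.symm, Iff.trans⟩

/-! ## Graphs, cuts and optimization programs -/

variable {V : Type*}

/-- Sum of an edge function along (the edge list of) a walk, with multiplicity. -/
def wkSum {β : Type*} [AddCommMonoid β] {G : SimpleGraph V} {x y : V}
    (f : Sym2 V → β) (L : G.Walk x y) : β :=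
  (L.edges.map f).sum

variable [Fintype V]

/-- Sum of an edge weight function over a set of edges. -/
def wsum (f : Sym2 V → ℝ) (S : Set (Sym2 V)) : ℝ :=
  ∑ e ∈ Finset.univ.filter (· ∈ S), f e

/-- The cut surface `μ(r)`: edges of `G` with one endpoint in `r`, the other outside. -/
def mu (G : SimpleGraph V) (r : Set V) : Set (Sym2 V) :=
  {e | e ∈ G.edgeSet ∧ ∃ x y, e = s(x, y) ∧ x ∈ r ∧ y ∉ r}

/-- `μ(r₁:r₂)`: edges of `G` with an endpoint in `r₁` and an endpoint in `r₂`. -/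
def mu2 (G : SimpleGraph V) (r₁ r₂ : Set V) : Set (Sym2 V) :=
  {e | e ∈ G.edgeSet ∧ ∃ x y, e = s(x, y) ∧ x ∈ r₁ ∧ y ∈ r₂}

/-- `r` is a cut for `X : Y`. -/
def IsCut (X Y r : Set V) : Prop := X ⊆ r ∧ Y ⊆ rᶜ

/-- The minimal cut area `𝒜(X:Y)`. -/
def minCut (G : SimpleGraph V) (w : Sym2 V → ℝ) (X Y : Set V) : ℝ :=
  sInf {a | ∃ r : Set V, IsCut X Y r ∧ a = wsum w (mu G r)}

/-- `(α,β,γ)` is a triway cut for `(A,B,C)`. -/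
def IsTriway (A B C α β γ : Set V) : Prop :=
  α ∪ β ∪ γ = Set.univ ∧ Disjoint α β ∧ Disjoint β γ ∧ Disjoint α γ ∧
    A ⊆ α ∧ B ⊆ β ∧ C ⊆ γ

/-- The area of a triway cut with tensions `(t_{A:B}, t_{B:C}, t_{C:A})`. -/
def triArea (G : SimpleGraph V) (w : Sym2 V → ℝ) (tAB tBC tCA : ℝ)
    (α β γ : Set V) : ℝ :=
  tAB * wsum w (mu2 G α β) + tBC * wsum w (mu2 G β γ) + tCA * wsum w (mu2 G γ α)

/-- The minimal triway cut area `𝒜_t(A:B:C)`. -/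
def triCut (G : SimpleGraph V) (w : Sym2 V → ℝ) (tAB tBC tCA : ℝ)
    (A B C : Set V) : ℝ :=
  sInf {a | ∃ α β γ : Set V, IsTriway A B C α β γ ∧ a = triArea G w tAB tBC tCA α β γ}

/-- Boundary data: `∂ = A ⊔ B ⊔ C` (pairwise disjoint). -/
def Bdy (A B C : Set V) : Prop := Disjoint A B ∧ Disjoint A C ∧ Disjoint B C

/-! ### The permutation optimization `R` -/

/-- The symmetric edge function induced by the Cayley distance of a vertex
configuration of permutations. -/
def permE {ι : Type*} [Fintype ι] (g : V → Equiv.Perm ι) : Sym2 V → ℝ :=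
  Sym2.lift ⟨fun x y => (cayley (g x) (g y) : ℝ),
    fun x y => congrArg Int.cast (cayley_comm (g x) (g y))⟩

/-- The free energy `R(g) = Σ_e w(e) d(g(x),g(y))`. -/
def Renergy {ι : Type*} [Fintype ι] (G : SimpleGraph V) (w : Sym2 V → ℝ)
    (g : V → Equiv.Perm ι) : ℝ :=
  wsum (fun e => w e * permE g e) G.edgeSet

/-- The optimal value `R` of the permutation optimization. -/
def Rval {ι : Type*} [Fintype ι] (G : SimpleGraph V) (w : Sym2 V → ℝ)
    (A B C : Set V) (g₁ g₂ : Equiv.Perm ι) : ℝ :=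
  sInf {a | ∃ g : V → Equiv.Perm ι,
    (∀ v ∈ A, g v = g₁) ∧ (∀ v ∈ B, g v = g₂) ∧ (∀ v ∈ C, g v = 1) ∧
    a = Renergy G w g}

/-! ### The set-partition optimization `Q` -/

/-- The symmetric integer edge function induced by the partition distance of a vertex
configuration of partitions. -/
def partEZ {κ : Type*} (q : V → Setoid κ) : Sym2 V → ℤ :=
  Sym2.lift ⟨fun x y => pdist (q x) (q y), fun x y => pdist_comm (q x) (q y)⟩

/-- The free energy `Q(q) = Σ_e w(e) d(q(x),q(y))`. -/
def Qenergy {κ : Type*} (G : SimpleGraph V) (w : Sym2 V → ℝ)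
    (q : V → Setoid κ) : ℝ :=
  wsum (fun e => w e * (partEZ q e : ℝ)) G.edgeSet

/-- The optimal value `Q` of the set-partition optimization. -/
def Qval {κ : Type*} (G : SimpleGraph V) (w : Sym2 V → ℝ)
    (A B C : Set V) (q₁ q₂ : Setoid κ) : ℝ :=
  sInf {a | ∃ q : V → Setoid κ,
    (∀ v ∈ A, q v = q₁) ∧ (∀ v ∈ B, q v = q₂) ∧ (∀ v ∈ C, q v = ⊥) ∧
    a = Qenergy G w q}

/-! ### The Boolean optimization `B` -/

/-- The Hamming distance between two bit strings. -/
def ham {κ : Type*} [Fintype κ] (b₁ b₂ : κ → Bool) : ℤ :=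
  ∑ k : κ, if b₁ k = b₂ k then 0 else 1

/-- The bit string `b(q)` of a partition: `false` exactly at singlets. -/
def bvec {κ : Type*} (p : Setoid κ) : κ → Bool :=
  fun u => if IsSinglet p u then false else true

/-- Feasibility of `r` for the Boolean program at configuration `b`. -/
def Bfeas {κ : Type*} [Fintype κ] (G : SimpleGraph V) (A B : Set V) (n : ℕ)
    (b : V → κ → Bool) (r : Sym2 V → ℕ) : Prop :=
  (∀ x ∈ A, ∀ y ∈ B, ∀ L : G.Walk x y,
    2 ∣ wkSum (fun e => (r e : ℤ)) L ∧
    wkSum (fun e => (r e : ℤ)) L ≥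
      2 * ((n : ℤ) - if ∀ v ∈ L.support, ∀ k, b v k = true then 1 else 0)) ∧
  (∀ x y : V, G.Adj x y → (r s(x, y) : ℤ) ≥ ⌈(ham (b x) (b y) : ℚ) / 2⌉)

/-- The inner Boolean optimum `B(b)` at a fixed Boolean configuration `b`. -/
def BvalAt {κ : Type*} [Fintype κ] (G : SimpleGraph V) (w : Sym2 V → ℝ)
    (A B : Set V) (n : ℕ) (b : V → κ → Bool) : ℝ :=
  sInf {a | ∃ r : Sym2 V → ℕ, Bfeas G A B n b r ∧
    a = wsum (fun e => w e * (r e : ℝ)) G.edgeSet}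

/-- The optimal value `B` of the Boolean optimization. -/
def Bval (κ : Type*) [Fintype κ] (G : SimpleGraph V) (w : Sym2 V → ℝ)
    (A B C : Set V) (n : ℕ) : ℝ :=
  sInf {a | ∃ b : V → κ → Bool,
    (∀ v ∈ A ∪ B, ∀ k, b v k = true) ∧ (∀ v ∈ C, ∀ k, b v k = false) ∧
    ∃ r : Sym2 V → ℕ, Bfeas G A B n b r ∧
      a = wsum (fun e => w e * (r e : ℝ)) G.edgeSet}

/-! ### The integer program `I` -/

/-- Feasibility of `(ρ,σ)` for the integer program. -/
def IPfeas (G : SimpleGraph V) (A B C : Set V) (n : ℕ) (ρ σ : Sym2 V → ℕ) : Prop :=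
  (∀ x ∈ A, ∀ y ∈ B, ∀ L : G.Walk x y,
    2 ∣ wkSum (fun e => (σ e : ℤ) + (ρ e : ℤ)) L ∧
    wkSum (fun e => (σ e : ℤ) + (ρ e : ℤ)) L ≥
      2 * ((n : ℤ) - if wkSum (fun e => (ρ e : ℤ)) L = 0 then 1 else 0)) ∧
  (∀ x ∈ A ∪ B, ∀ y ∈ C, ∀ L : G.Walk x y,
    wkSum (fun e => (ρ e : ℤ)) L ≥ (n : ℤ))

/-- The objective of the integer program. -/
def IPobj (G : SimpleGraph V) (w : Sym2 V → ℝ) (ρ σ : Sym2 V → ℕ) : ℝ :=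
  wsum (fun e => w e * ((σ e : ℝ) + (ρ e : ℝ))) G.edgeSet

/-- The optimal value `I` of the integer program. -/
def Ival (G : SimpleGraph V) (w : Sym2 V → ℝ) (A B C : Set V) (n : ℕ) : ℝ :=
  sInf {a | ∃ ρ σ : Sym2 V → ℕ, IPfeas G A B C n ρ σ ∧ a = IPobj G w ρ σ}

/-! ### The ℓ-intersecting cut problem `M` -/

/-- Feasibility for the `ℓ`-intersecting cut problem with boundary sets
`Γ₀, …, Γ_ℓ` and `C`, for a half-integer valued `ϱ`. -/
def Mfeas (G : SimpleGraph V) (Γ : ℕ → Set V) (ℓ : ℕ) (C : Set V)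
    (ϱ : Sym2 V → ℚ) : Prop :=
  (∀ e, ∃ j : ℕ, ϱ e = (j : ℚ) / 2) ∧
  (∀ k k' : ℕ, k ≤ ℓ → k' ≤ ℓ → ∀ x ∈ Γ k, ∀ y ∈ Γ k', ∀ L : G.Walk x y,
    ∃ j : ℕ, wkSum ϱ L = |(k : ℚ) - (k' : ℚ)| + (j : ℚ)) ∧
  (∀ k : ℕ, k ≤ ℓ → ∀ x ∈ Γ k, ∀ y ∈ C, ∀ L : G.Walk x y,
    ∃ j : ℕ, wkSum ϱ L = (ℓ : ℚ) / 2 + (j : ℚ))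

/-- The objective of the `ℓ`-intersecting cut problem. -/
def Mobj (G : SimpleGraph V) (w : Sym2 V → ℝ) (ϱ : Sym2 V → ℚ) : ℝ :=
  wsum (fun e => w e * (ϱ e : ℝ)) G.edgeSet

/-- The optimal value `M` of the `ℓ`-intersecting cut problem. -/
def Mval (G : SimpleGraph V) (w : Sym2 V → ℝ) (Γ : ℕ → Set V) (ℓ : ℕ)
    (C : Set V) : ℝ :=
  sInf {a | ∃ ϱ : Sym2 V → ℚ, Mfeas G Γ ℓ C ϱ ∧ a = Mobj G w ϱ}

/-- The complementary reduced graph `G^c`: the edges of `G` not lying entirely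
inside `V'`. -/
def reducedGraph (G : SimpleGraph V) (V' : Set V) : SimpleGraph V where
  Adj x y := G.Adj x y ∧ ¬ (x ∈ V' ∧ y ∈ V')
  symm := by
    constructor
    intro x y h
    exact ⟨h.1.symm, fun hc => h.2 ⟨hc.2, hc.1⟩⟩
  loopless := by
    constructor
    intro x h
    exact G.loopless.irrefl x h.1

end RTN

/-! The proof rests on the semimodularity of the partition lattice
(`nb_sub_nb_sup_le_of_le`): for `q ≤ q'`, joining `b` merges at least as many blocks of `q`
as of `q'`. For an atom `b` this holds because joining an atom lowers the block count by one
exactly when it links two distinct blocks, and an atom linking two blocks of `q'` also links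
two blocks of the finer `q`; a general `b` is a finite join of atoms. The triangle inequality
and the contraction `d(p ⊔ r, q ⊔ r) ≤ d(p, q)` are then rearrangements of this inequality. -/

namespace RTN

variable {α : Type*}

lemma map_of_le_surjective {p q : Setoid α} (h : p ≤ q) :
    Function.Surjective (Setoid.map_of_le h) :=
  fun u => Quotient.inductionOn u fun x => ⟨Quotient.mk p x, rfl⟩

lemma nb_antitone [Finite α] : Antitone (nb : Setoid α → ℤ) := fun _ _ h =>
  Nat.cast_le.2 <| Nat.card_le_card_of_surjective _ <| map_of_le_surjective h

lemma eq_of_le_of_nb_le [Finite α] {p q : Setoid α} (h : p ≤ q) (hn : nb p ≤ nb q) :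
    p = q := by
  have hinj : Function.Injective (Setoid.map_of_le h) :=
    ((map_of_le_surjective h).bijective_of_nat_card_le (by unfold nb at hn; omega)).1
  exact le_antisymm h fun x y hxy => Quotient.exact (hinj (Quotient.sound hxy))

def atom (i j : α) : Setoid α := Relation.EqvGen.setoid fun x y => x = i ∧ y = j

lemma atom_le_iff {q : Setoid α} {i j : α} : atom i j ≤ q ↔ q.r i j :=
  ⟨fun h => h (Relation.EqvGen.rel _ _ ⟨rfl, rfl⟩),
    fun h => Setoid.eqvGen_le fun _ _ ⟨hx, hy⟩ => hx ▸ hy ▸ h⟩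

lemma nb_sup_atom_of_not_rel [Finite α] {q : Setoid α} {i j : α} (h : ¬ q.r i j) :
    nb (q ⊔ atom i j) = nb q - 1 := by
  have hij : (⟦i⟧ : Quotient q) ≠ ⟦j⟧ := fun e => h (Quotient.exact e)
  -- `q ⊔ atom i j` is the kernel of the map identifying the classes of `i` and `j`
  let merge : Quotient q → Quotient q := Function.update id ⟦j⟧ ⟦i⟧
  have hker : q ⊔ atom i j = Setoid.ker (merge ∘ Quotient.mk q) := by
    refine le_antisymm (sup_le (fun x y hxy => ?_) (atom_le_iff.2 ?_)) fun x y hxy => ?_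
    · exact congrArg merge (Quotient.sound hxy)
    · simp [merge, Setoid.ker_def, hij]
    · have hmerge : ∀ u, Setoid.map_of_le le_sup_left (merge u) =
          Setoid.map_of_le (le_sup_left : q ≤ q ⊔ atom i j) u := by
        intro u
        by_cases hu : u = ⟦j⟧
        · subst hu
          simp only [merge, Function.update_self]
          exact Quotient.sound (atom_le_iff.1 le_sup_right)
        · simp [merge, hu]
      have := congrArg (Setoid.map_of_le (le_sup_left : q ≤ q ⊔ atom i j)) hxy
      rw [Function.comp_apply, Function.comp_apply, hmerge, hmerge] at this
      exact Quotient.exact this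
  have hrange : Set.range (merge ∘ Quotient.mk q) = {⟦j⟧}ᶜ := by
    rw [Quotient.mk_surjective.range_comp]
    ext u
    refine ⟨?_, fun hu => ⟨u, Function.update_of_ne hu _ _⟩⟩
    rintro ⟨v, rfl⟩
    by_cases hv : v = ⟦j⟧
    · simpa [merge, hv] using hij
    · simp [merge, hv]
  unfold nb
  rw [hker, Nat.card_congr (Setoid.quotientKerEquivRange _), hrange, Nat.card_coe_set_eq,
    Set.ncard_compl, Set.ncard_singleton]
  have : 0 < Nat.card (Quotient q) := Nat.card_pos_iff.2 ⟨⟨⟦i⟧⟩, inferInstance⟩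
  omega

lemma nb_sub_nb_sup_atom_le [Finite α] {q q' : Setoid α} (h : q ≤ q') (i j : α) :
    nb q' - nb (q' ⊔ atom i j) ≤ nb q - nb (q ⊔ atom i j) := by
  by_cases hq' : q'.r i j
  · rw [sup_eq_left.2 (atom_le_iff.2 hq')]
    linarith [nb_antitone (le_sup_left : q ≤ q ⊔ atom i j)]
  · rw [nb_sup_atom_of_not_rel hq', nb_sup_atom_of_not_rel fun hq => hq' (h hq)]
    omega

lemma sup_atoms_eq [Fintype α] (b : Setoid α) :
    {x : α × α | b.r x.1 x.2}.toFinset.sup (fun x => atom x.1 x.2) = b :=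
  le_antisymm (Finset.sup_le fun x hx => atom_le_iff.2 (by simpa using hx)) fun x y hxy =>
    atom_le_iff.1 <|
      Finset.le_sup (f := fun x : α × α => atom x.1 x.2) (b := (x, y)) (by simpa using hxy)

theorem nb_sub_nb_sup_le_of_le [Finite α] (b : Setoid α) {q q' : Setoid α} (h : q ≤ q') :
    nb q' - nb (q' ⊔ b) ≤ nb q - nb (q ⊔ b) := by
  have := Fintype.ofFinite α
  rw [← sup_atoms_eq b]
  generalize {x : α × α | b.r x.1 x.2}.toFinset = s
  induction s using Finset.induction_on generalizing q q' with
  | empty => simp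
  | insert x s _ ih =>
    rw [Finset.sup_insert, ← sup_assoc, ← sup_assoc]
    linarith [nb_sub_nb_sup_atom_le h x.1 x.2, ih (sup_le_sup_right h (atom x.1 x.2))]

lemma pdist_eq_zero_iff [Finite α] {p q : Setoid α} : pdist p q = 0 ↔ p = q := by
  refine ⟨fun h => ?_, fun h => by simp [h, pdist]; ring⟩
  have hp := nb_antitone (le_sup_left : p ≤ p ⊔ q)
  have hq := nb_antitone (le_sup_right : q ≤ p ⊔ q)
  unfold pdist at h
  exact (eq_of_le_of_nb_le le_sup_left (by linarith)).trans
    (eq_of_le_of_nb_le le_sup_right (by linarith)).symm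

variable [Finite α] (p q r : Setoid α)

lemma pdist_nonneg : 0 ≤ pdist p q := by
  unfold pdist
  linarith [nb_antitone (le_sup_left : p ≤ p ⊔ q), nb_antitone (le_sup_right : q ≤ p ⊔ q)]

lemma abs_nb_sub_nb_le_pdist : |nb p - nb q| ≤ pdist p q := by
  have hp := nb_antitone (le_sup_left : p ≤ p ⊔ q)
  have hq := nb_antitone (le_sup_right : q ≤ p ⊔ q)
  rw [abs_le]
  constructor <;> unfold pdist <;> linarith

lemma pdist_triangle : pdist p r ≤ pdist p q + pdist q r := by
  have hsub := nb_sub_nb_sup_le_of_le p (le_sup_left : q ≤ q ⊔ r)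
  have hle := nb_antitone (sup_le le_sup_right (le_sup_right.trans le_sup_left) :
    p ⊔ r ≤ q ⊔ r ⊔ p)
  rw [sup_comm q p] at hsub
  unfold pdist
  linarith

lemma pdist_sup_le : pdist (p ⊔ r) (q ⊔ r) ≤ pdist p q := by
  have hp := nb_sub_nb_sup_le_of_le r (le_sup_left : p ≤ p ⊔ q)
  have hq := nb_sub_nb_sup_le_of_le r (le_sup_right : q ≤ p ⊔ q)
  unfold pdist
  rw [sup_sup_sup_comm, sup_idem]
  linarith

end RTN

/-- The partition distance `d(p,q) = #(p)+#(q)-2#(p⊔q)` is a metric on the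
lattice of set partitions of `{1,…,N}`; moreover (a) `d(p,p') ≥ |#(p)-#(p')|` and
(b) `d(p₁,p₂) ≥ d(p₁⊔r, p₂⊔r)`. -/
theorem partition_distance_metric {N : ℕ} (p p' p'' : Setoid (Fin N)) :
    (0 ≤ RTN.pdist p p' ∧ (RTN.pdist p p' = 0 ↔ p = p')) ∧
    RTN.pdist p p' = RTN.pdist p' p ∧
    RTN.pdist p p' + RTN.pdist p' p'' ≥ RTN.pdist p p'' ∧
    RTN.pdist p p' ≥ |RTN.nb p - RTN.nb p'| ∧
    (∀ r : Setoid (Fin N), RTN.pdist p p' ≥ RTN.pdist (p ⊔ r) (p' ⊔ r)) :=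
  ⟨⟨RTN.pdist_nonneg p p', RTN.pdist_eq_zero_iff⟩, RTN.pdist_comm p p',
    RTN.pdist_triangle p p' p'', RTN.abs_nb_sub_nb_le_pdist p p', RTN.pdist_sup_le p p'⟩
end
end

section
/- For all set partitions q₁,q₂∈P_N one has d(q₁,q₂)≥⌈d₁(s(q₁),s(q₂))/2⌉, where d is the partition distance, s(·) is the singlet pattern, and d₁ is the singlet distance. -/
open scoped Classical

noncomputable section

/-!
Put `r = q₁ ⊔ q₂`. For `q ≤ r`, a block of `r` is either a single block of `q`, and then it has
the same singlets for `q` and for `r`, or it contains at least two blocks of `q`. Counting block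
by block gives `#₁(q) + 2 #(r) ≤ 2 #(q) + #₁(r)`. Adding this for `q₁` and `q₂` yields
`d₁ ≤ 2 d`, because the singlets of `q₁ ⊔ q₂`, and those of `s(q₁) ⊔ s(q₂)`, are exactly the
common singlets of `q₁` and `q₂`.
-/

theorem Nat.card_eq_sum_card_fiber {β γ : Type*} [Finite β] [Fintype γ] (f : β → γ) :
    Nat.card β = ∑ c, Nat.card {b // f b = c} := by
  rw [← Nat.card_sigma]
  exact Nat.card_congr (Equiv.sigmaFiberEquiv f).symm

namespace RTN

variable {α : Type*}

theorem isSinglet_iff_le_ker {s : Setoid α} {x : α} :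
    IsSinglet s x ↔ s ≤ Setoid.ker (· = x) := by
  refine ⟨fun hx a b hab => Setoid.ker_def.mpr (propext ⟨?_, ?_⟩), fun hs y hxy => ?_⟩
  · rintro rfl
    exact hx b hab
  · rintro rfl
    exact hx a (s.symm hab)
  · exact (Setoid.ker_def.mp (hs hxy)).mp rfl

theorem isSinglet_sup_iff {s t : Setoid α} {x : α} :
    IsSinglet (s ⊔ t) x ↔ IsSinglet s x ∧ IsSinglet t x := by
  simp only [isSinglet_iff_le_ker, sup_le_iff]

theorem isSinglet_spat_iff {p : Setoid α} {x : α} : IsSinglet (spat p) x ↔ IsSinglet p x := by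
  refine ⟨fun hx y hxy => ?_, fun hx y hxy => ?_⟩
  · by_contra hyx
    have hx' : ¬ IsSinglet p x := fun h => hyx (h y hxy)
    have hy' : ¬ IsSinglet p y := fun h => hyx (h x (p.symm hxy)).symm
    exact hyx (hx y (Or.inr ⟨hx', hy'⟩))
  · rcases hxy with rfl | ⟨hx', -⟩
    · rfl
    · exact absurd hx hx'

theorem nS_spat (p : Setoid α) : nS (spat p) = nS p := by
  unfold nS
  rw [Nat.card_congr (Equiv.subtypeEquivRight fun _ => isSinglet_spat_iff)]

theorem nS_spat_sup_spat (p q : Setoid α) : nS (spat p ⊔ spat q) = nS (p ⊔ q) := by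
  unfold nS
  rw [Nat.card_congr (Equiv.subtypeEquivRight fun _ => isSinglet_sup_iff.trans
    ((and_congr isSinglet_spat_iff isSinglet_spat_iff).trans isSinglet_sup_iff.symm))]

theorem sdist_spat (p q : Setoid α) :
    sdist (spat p) (spat q) = nS p + nS q - 2 * nS (p ⊔ q) := by
  rw [sdist, nS_spat, nS_spat, nS_spat_sup_spat]

section Fibers

variable {q r : Setoid α} (hqr : q ≤ r)

def blockMap : Quotient q → Quotient r := Quotient.map' id fun _ _ h => hqr h

theorem blockMap_mk (x : α) : blockMap hqr ⟦x⟧ = ⟦x⟧ := rfl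

theorem one_le_card_blockMap_fiber [Finite α] (c : Quotient r) :
    1 ≤ Nat.card {b // blockMap hqr b = c} := by
  obtain ⟨x, rfl⟩ := Quotient.exists_rep c
  have : Nonempty {b // blockMap hqr b = ⟦x⟧} := ⟨⟨⟦x⟧, blockMap_mk hqr x⟩⟩
  exact Nat.card_pos

theorem card_singlets_fiber_le_card_blockMap_fiber [Finite α] (c : Quotient r) :
    Nat.card {x : {x // IsSinglet q x} // (⟦x.1⟧ : Quotient r) = c}
      ≤ Nat.card {b // blockMap hqr b = c} := by
  refine Nat.card_le_card_of_injective (fun x => ⟨⟦x.1.1⟧, x.2⟩) fun x y hxy => ?_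
  have hq : q.r x.1.1 y.1.1 := Quotient.exact (congrArg Subtype.val hxy)
  exact Subtype.ext (Subtype.ext (x.1.2 _ hq).symm)

theorem isSinglet_of_card_blockMap_fiber_le_one [Finite α] {c : Quotient r}
    (hc : Nat.card {b // blockMap hqr b = c} ≤ 1) {x : α} (hx : IsSinglet q x)
    (hxc : (⟦x⟧ : Quotient r) = c) : IsSinglet r x := by
  have : Subsingleton {b // blockMap hqr b = c} := Finite.card_le_one_iff_subsingleton.mp hc
  intro y hxy
  have hyc : (⟦y⟧ : Quotient r) = c := (Quotient.sound (r.symm hxy)).trans hxc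
  have hb : (⟨⟦x⟧, hxc⟩ : {b // blockMap hqr b = c}) = ⟨⟦y⟧, hyc⟩ := Subsingleton.elim _ _
  exact hx y (Quotient.exact (congrArg Subtype.val hb))

/-- The inequality of the header, restricted to the block `c` of `r`. -/
theorem card_singlets_fiber_add_two_le [Finite α] (c : Quotient r) :
    Nat.card {x : {x // IsSinglet q x} // (⟦x.1⟧ : Quotient r) = c} + 2
      ≤ 2 * Nat.card {b // blockMap hqr b = c}
        + Nat.card {x : {x // IsSinglet r x} // (⟦x.1⟧ : Quotient r) = c} := by
  have hpos := one_le_card_blockMap_fiber hqr c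
  have hle := card_singlets_fiber_le_card_blockMap_fiber hqr c
  by_cases hc : Nat.card {b // blockMap hqr b = c} ≤ 1
  · have : Nat.card {x : {x // IsSinglet q x} // (⟦x.1⟧ : Quotient r) = c}
        ≤ Nat.card {x : {x // IsSinglet r x} // (⟦x.1⟧ : Quotient r) = c} :=
      Nat.card_le_card_of_injective
        (fun x => ⟨⟨x.1.1, isSinglet_of_card_blockMap_fiber_le_one hqr hc x.1.2 x.2⟩, x.2⟩)
        fun x y hxy => Subtype.ext (Subtype.ext (congrArg (·.1.1) hxy))
    omega
  · omega

end Fibers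

theorem nS_add_two_mul_nb_le [Finite α] {q r : Setoid α} (hqr : q ≤ r) :
    nS q + 2 * nb r ≤ 2 * nb q + nS r := by
  have hsum := Finset.sum_le_sum fun c (_ : c ∈ Finset.univ) =>
    card_singlets_fiber_add_two_le hqr c
  simp only [Finset.sum_add_distrib, ← Finset.mul_sum, ← Nat.card_eq_sum_card_fiber,
    Finset.sum_const, Finset.card_univ, smul_eq_mul] at hsum
  unfold nS nb
  rw [Nat.card_eq_fintype_card (α := Quotient r)]
  omega

end RTN

/-- For all set partitions `q₁, q₂ ∈ P_N`:
`d(q₁,q₂) ≥ ⌈d₁(s(q₁),s(q₂))/2⌉`. -/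
theorem pdist_ge_ceil_half_singlet_dist {N : ℕ} (q₁ q₂ : Setoid (Fin N)) :
    RTN.pdist q₁ q₂ ≥ ⌈(RTN.sdist (RTN.spat q₁) (RTN.spat q₂) : ℚ) / 2⌉ := by
  have h₁ := RTN.nS_add_two_mul_nb_le (le_sup_left : q₁ ≤ q₁ ⊔ q₂)
  have h₂ := RTN.nS_add_two_mul_nb_le (le_sup_right : q₂ ≤ q₁ ⊔ q₂)
  have hd : RTN.sdist (RTN.spat q₁) (RTN.spat q₂) ≤ RTN.pdist q₁ q₂ * 2 := by
    rw [RTN.sdist_spat, RTN.pdist]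
    linarith
  rw [ge_iff_le, Int.ceil_le, div_le_iff₀ two_pos]
  exact_mod_cast hd
end
end
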